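/- arXiv:1502.00328 — 2 statements merged into one kernel-verified Lean document; each statement's English description precedes it below -/
import Mathlib

section
/- Let F ∈ ℂ[X₁,…,Xₙ]ⁿ be a Keller map and suppose that the set of points a ∈ ℂⁿ with F⁻¹(a) = ∅ contains the zero set of a nonconstant polynomial H ∈ ℂ[X]. Then a contradiction follows; i.e., the non-surjectivity locus E₀ = {a ∈ ℂⁿ : F⁻¹(a) = ∅} cannot contain a hypersurface. -/
/-!
If `H` vanished nowhere on the image of the Keller map `F`, then `H ∘ F` would be a polynomial
without zeros, hence a constant by the Nullstellensatz. By the chain rule,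
`(∂H/∂Xᵢ ∘ F)ᵢ ⬝ DF = ∇(H ∘ F) = 0`, and `DF` is invertible, so every `∂H/∂Xᵢ ∘ F` vanishes.
Composition with `F` is injective (a kernel element of least total degree would have all its
partial derivatives in the kernel, hence be constant), so all `∂H/∂Xᵢ` vanish and `H` is constant.
-/

open MvPolynomial
open scoped Matrix

namespace MvPolynomial

variable {R σ τ : Type*}

section CommSemiring

variable [CommSemiring R]

noncomputable def jacobian (F : σ → MvPolynomial τ R) : Matrix σ τ (MvPolynomial τ R) :=
  Matrix.of fun i j => pderiv j (F i)

theorem eval_bind₁ (F : σ → MvPolynomial τ R) (g : MvPolynomial σ R) (x : τ → R) :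
    eval x (bind₁ F g) = eval (fun i => eval x (F i)) g :=
  eval₂Hom_bind₁ _ _ _ _

theorem pderiv_bind₁ [Fintype σ] (F : σ → MvPolynomial τ R) (g : MvPolynomial σ R) (j : τ) :
    pderiv j (bind₁ F g) = ∑ i, bind₁ F (pderiv i g) * pderiv j (F i) := by
  classical
  induction g using MvPolynomial.induction_on with
  | C a => simp
  | add p q hp hq => simp [hp, hq, add_mul, Finset.sum_add_distrib]
  | mul_X p i hp =>
    simp only [map_mul, bind₁_X_right, Derivation.leibniz, pderiv_X, Pi.single_apply, hp,
      smul_eq_mul, mul_ite, mul_one, mul_zero, apply_ite (bind₁ F), map_zero, map_add, add_mul,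
      ite_mul, zero_mul, Finset.sum_add_distrib, Finset.sum_ite_eq, Finset.mem_univ, if_true,
      Finset.mul_sum, mul_assoc]

theorem vecMul_jacobian [Fintype σ] (F : σ → MvPolynomial τ R) (g : MvPolynomial σ R) :
    (fun i => bind₁ F (pderiv i g)) ᵥ* jacobian F = fun j => pderiv j (bind₁ F g) := by
  funext j
  simp only [Matrix.vecMul, dotProduct, jacobian, Matrix.of_apply, pderiv_bind₁]

theorem totalDegree_pderiv_le (p : MvPolynomial σ R) (i : σ) :
    (pderiv i p).totalDegree ≤ p.totalDegree - 1 := by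
  refine Finset.sup_le fun m hm => ?_
  have hm' : m + Finsupp.single i 1 ∈ p.support := by
    rw [mem_support_iff, coeff_pderiv] at hm
    exact mem_support_iff.2 (left_ne_zero_of_mul hm)
  have := le_totalDegree hm'
  rw [Finsupp.sum_add_index' (fun _ => rfl) (fun _ _ _ => rfl),
    Finsupp.sum_single_index rfl] at this
  omega

end CommSemiring

section CommRing

variable [CommRing R]

theorem eq_C_of_forall_pderiv_eq_zero [IsAddTorsionFree R] {p : MvPolynomial σ R}
    (h : ∀ i, pderiv i p = 0) : p = C (coeff 0 p) := by
  classical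
  ext m
  rw [coeff_C]
  split_ifs with hm
  · rw [hm]
  obtain ⟨i, hi⟩ : ∃ i, m i ≠ 0 := by simpa [Finsupp.ext_iff] using Ne.symm hm
  have hsingle : Finsupp.single i 1 ≤ m := by
    simpa [Finsupp.single_le_iff] using Nat.one_le_iff_ne_zero.2 hi
  have := coeff_pderiv (i := i) p (m - Finsupp.single i 1)
  rwa [h i, coeff_zero, tsub_add_cancel_of_le hsingle, ← Nat.cast_succ, mul_comm, ← nsmul_eq_mul,
    eq_comm, nsmul_eq_zero_iff_right (Nat.succ_ne_zero _)] at this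

variable [Fintype σ] [DecidableEq σ] {F : σ → MvPolynomial σ R}

theorem bind₁_pderiv_eq_zero_of_bind₁_eq_C (hF : IsUnit (jacobian F).det)
    {g : MvPolynomial σ R} {c : R} (hg : bind₁ F g = C c) (i : σ) :
    bind₁ F (pderiv i g) = 0 := by
  have hvec : (fun i => bind₁ F (pderiv i g)) ᵥ* jacobian F = 0 ᵥ* jacobian F := by
    rw [vecMul_jacobian, hg, Matrix.zero_vecMul]
    simp only [pderiv_C]
    rfl
  exact congrFun (Matrix.vecMul_injective_of_isUnit ((Matrix.isUnit_iff_isUnit_det _).2 hF) hvec) i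

theorem bind₁_injective_of_isUnit_det_jacobian [IsAddTorsionFree R]
    (hF : IsUnit (jacobian F).det) : Function.Injective (bind₁ F) := by
  refine (injective_iff_map_eq_zero (bind₁ F)).2 fun g => ?_
  induction hd : g.totalDegree using Nat.strong_induction_on generalizing g with
  | _ d ih =>
    intro hg
    have hgC : g = C (coeff 0 g) := by
      rcases Nat.eq_zero_or_pos d with rfl | hd0
      · exact totalDegree_eq_zero_iff_eq_C.1 hd
      refine eq_C_of_forall_pderiv_eq_zero fun i => ih _ ?_ _ rfl ?_
      · have := totalDegree_pderiv_le g i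
        omega
      · exact bind₁_pderiv_eq_zero_of_bind₁_eq_C hF (c := 0) (by rw [hg, map_zero]) i
    rw [hgC, bind₁_C_right, C_eq_zero] at hg
    rw [hgC, hg, map_zero]

theorem eq_C_of_bind₁_eq_C [IsAddTorsionFree R] (hF : IsUnit (jacobian F).det)
    {g : MvPolynomial σ R} {c : R} (hg : bind₁ F g = C c) : g = C (coeff 0 g) :=
  eq_C_of_forall_pderiv_eq_zero fun i => bind₁_injective_of_isUnit_det_jacobian hF <| by
    rw [bind₁_pderiv_eq_zero_of_bind₁_eq_C hF hg i, map_zero]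

end CommRing

theorem exists_eq_C_of_forall_eval_ne_zero {K : Type*} [Field K] [IsAlgClosed K] [Finite σ]
    {p : MvPolynomial σ K} (h : ∀ x, eval x p ≠ 0) : ∃ c, p = C c := by
  have hempty : zeroLocus K (Ideal.span {p}) = ∅ :=
    Set.eq_empty_of_forall_notMem fun x hx => h x (hx p (Ideal.mem_span_singleton_self p))
  have hunit : IsUnit p := by
    rw [← Ideal.span_singleton_eq_top, ← Ideal.radical_eq_top,
      ← vanishingIdeal_zeroLocus_eq_radical (K := K), hempty]
    exact vanishingIdeal_empty
  obtain ⟨c, -, hc⟩ := isUnit_iff_eq_C_of_isReduced.1 hunit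
  exact ⟨c, hc⟩

end MvPolynomial

/-- The non-surjectivity locus of a Keller map cannot contain the zero set of a nonconstant
polynomial: assuming it does yields a contradiction. -/
theorem stmt_9 (n : ℕ) (F : Fin n → MvPolynomial (Fin n) ℂ)
    (hK : (Matrix.of fun i j => pderiv j (F i)).det = 1)
    (H : MvPolynomial (Fin n) ℂ)
    (hH : ¬ ∃ c : ℂ, H = MvPolynomial.C c)
    (h0 : ∀ a : Fin n → ℂ, eval a H = 0 → ∀ x : Fin n → ℂ, (fun i => eval x (F i)) ≠ a) :
    False := by
  have hJ : IsUnit (jacobian F).det := hK ▸ isUnit_one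
  have hHF : ∀ x, eval x (bind₁ F H) ≠ 0 := fun x hx =>
    h0 _ (by rwa [eval_bind₁] at hx) x rfl
  obtain ⟨c, hc⟩ := exists_eq_C_of_forall_eval_ne_zero hHF
  exact hH ⟨_, eq_C_of_bind₁_eq_C hJ hc⟩
end

section
/- Let C be an irreducible affine curve in ℂⁿ defined over ℚ and suppose C ∩ d⁻¹ℤⁿ is infinite for some positive integer d, and let H ∈ ℤ[X] be nonconstant on C. Then for every sequence of points a_k ∈ C ∩ d⁻¹ℤⁿ tending to infinity, |H(a_k)| → ∞. -/
/-!
Clearing denominators, `m k := d ^ deg H * H(a k)` is an integer, so it suffices that each integer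
is taken only finitely often. The indices with `m k = m₀` send `a k` into the level set
`{x ∈ C | H x = m₀ / d ^ deg H}`, which is finite because `H` is nonconstant on the irreducible
curve `C`: each of its points gives a maximal ideal minimal over `I(C) + (H - c)` (a prime strictly
between `I(C)` and a maximal ideal would make `dim C ≥ 2`), and a noetherian ideal has only finitely
many minimal primes. A finite set is bounded, and `‖a k‖ → ∞`.
-/

open MvPolynomial Filter

/-- The ideal of polynomials over `ℂ` vanishing on a subset `C ⊆ ℂⁿ`. -/
noncomputable def vanishingIdeal (n : ℕ) (C : Set (Fin n → ℂ)) : Ideal (MvPolynomial (Fin n) ℂ) :=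
  ⨅ x ∈ C, RingHom.ker (eval x)

lemma mem_vanishingIdeal {n : ℕ} {C : Set (Fin n → ℂ)} {p : MvPolynomial (Fin n) ℂ} :
    p ∈ vanishingIdeal n C ↔ ∀ x ∈ C, eval x p = 0 := by
  simp [_root_.vanishingIdeal, RingHom.mem_ker]

theorem Ideal.isMaximal_of_isPrime_of_lt {R : Type*} [CommRing R] {I Q : Ideal R} [I.IsPrime]
    [Ring.KrullDimLE 1 (R ⧸ I)] [Q.IsPrime] (hIQ : I < Q) : Q.IsMaximal := by
  have hQ' : (Q.map (Ideal.Quotient.mk I)).IsPrime :=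
    Ideal.map_isPrime_of_surjective Ideal.Quotient.mk_surjective
      (by rw [Ideal.mk_ker]; exact hIQ.le)
  have hne : Q.map (Ideal.Quotient.mk I) ≠ ⊥ := by
    rw [Ne, Ideal.map_eq_bot_iff_le_ker, Ideal.mk_ker]
    exact hIQ.not_ge
  have := hQ'.isMaximal_of_ne_bot hne
  rw [← Ideal.comap_map_mk hIQ.le]
  exact Ideal.comap_isMaximal_of_surjective _ Ideal.Quotient.mk_surjective

theorem Ideal.mem_minimalPrimes_sup_span_singleton {R : Type*} [CommRing R] {I P : Ideal R}
    [I.IsPrime] [Ring.KrullDimLE 1 (R ⧸ I)] {f : R} (hf : f ∉ I) [hP : P.IsMaximal]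
    (hIP : I ≤ P) (hfP : f ∈ P) : P ∈ (I ⊔ Ideal.span {f}).minimalPrimes := by
  obtain ⟨Q, hQ, hQP⟩ :=
    Ideal.exists_minimalPrimes_le (sup_le hIP ((Ideal.span_singleton_le_iff_mem P).2 hfP))
  have hfQ : f ∈ Q := hQ.1.2 (Ideal.mem_sup_right (Ideal.mem_span_singleton_self f))
  have hIQ : I < Q := lt_of_le_of_ne (le_sup_left.trans hQ.1.2) fun h => hf (h ▸ hfQ)
  have := hQ.1.1
  have hQmax : Q.IsMaximal := Ideal.isMaximal_of_isPrime_of_lt hIQ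
  rwa [← hQmax.eq_of_le hP.ne_top hQP]

theorem MvPolynomial.ker_eval_injective {σ K : Type*} [CommRing K] :
    Function.Injective fun x : σ → K => RingHom.ker (eval x) := by
  intro x y hxy
  funext j
  have : X j - C (x j) ∈ RingHom.ker (eval y) := by
    rw [← show RingHom.ker (eval x) = RingHom.ker (eval y) from hxy]
    simp [RingHom.mem_ker]
  simpa [RingHom.mem_ker, sub_eq_zero, eq_comm] using this

theorem finite_setOf_eval_eq_zero_of_ringKrullDim_le_one {n : ℕ} {C : Set (Fin n → ℂ)}
    (hprime : (vanishingIdeal n C).IsPrime)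
    (hdim : ringKrullDim (MvPolynomial (Fin n) ℂ ⧸ vanishingIdeal n C) ≤ 1)
    {f : MvPolynomial (Fin n) ℂ} (hf : ∃ x ∈ C, eval x f ≠ 0) :
    {x ∈ C | eval x f = 0}.Finite := by
  have := Ring.krullDimLE_iff.2 hdim
  have hfI : f ∉ vanishingIdeal n C := fun h =>
    let ⟨x, hx, hfx⟩ := hf; hfx (mem_vanishingIdeal.1 h x hx)
  have hmin : ∀ x ∈ {x ∈ C | eval x f = 0},
      RingHom.ker (eval x) ∈ (vanishingIdeal n C ⊔ Ideal.span {f}).minimalPrimes := by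
    rintro x ⟨hxC, hfx⟩
    have := RingHom.ker_isMaximal_of_surjective (eval x) fun c => ⟨MvPolynomial.C c, eval_C c⟩
    exact Ideal.mem_minimalPrimes_sup_span_singleton hfI
      (fun p hp => mem_vanishingIdeal.1 hp x hxC) hfx
  exact ((Ideal.finite_minimalPrimes_of_isNoetherianRing _ _).subset
    (Set.image_subset_iff.2 hmin)).of_finite_image ker_eval_injective.injOn

theorem finite_setOf_aeval_eq_of_ringKrullDim_le_one {n : ℕ} {C : Set (Fin n → ℂ)}
    (hprime : (vanishingIdeal n C).IsPrime)
    (hdim : ringKrullDim (MvPolynomial (Fin n) ℂ ⧸ vanishingIdeal n C) ≤ 1)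
    {R : Type*} [CommRing R] [Algebra R ℂ] {H : MvPolynomial (Fin n) R} {c : ℂ}
    (hH : ∃ x ∈ C, aeval x H ≠ c) : {x ∈ C | aeval x H = c}.Finite := by
  set f := map (algebraMap R ℂ) H - MvPolynomial.C c
  have heval : ∀ x, eval x f = aeval x H - c := fun x => by
    simp [f, eval_map, aeval_def]
  convert finite_setOf_eval_eq_zero_of_ringKrullDim_le_one hprime hdim (f := f)
    (by simpa only [heval, sub_ne_zero] using hH) using 4
  rw [heval, sub_eq_zero]

theorem exists_intCast_eq_pow_totalDegree_mul_aeval {σ A : Type*} [CommRing A]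
    (H : MvPolynomial σ ℤ) {d : ℤ} {x : σ → A} (hx : ∀ j, ∃ z : ℤ, (d : A) * x j = z) :
    ∃ m : ℤ, (m : A) = (d : A) ^ H.totalDegree * aeval x H := by
  rw [← Subring.mem_bot, aeval_def, eval₂_eq, Finset.mul_sum]
  refine Subring.sum_mem _ fun e he => ?_
  have hdeg : e.sum (fun _ k => k) ≤ H.totalDegree := le_totalDegree he
  have hterm :
      (d : A) ^ H.totalDegree * (algebraMap ℤ A (coeff e H) * ∏ j ∈ e.support, x j ^ e j) =
        algebraMap ℤ A (coeff e H * d ^ (H.totalDegree - e.sum fun _ k => k)) *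
          ∏ j ∈ e.support, ((d : A) * x j) ^ e j := by
    rw [← Nat.sub_add_cancel hdeg, pow_add, Nat.add_sub_cancel]
    simp only [mul_pow, Finset.prod_mul_distrib, Finset.prod_pow_eq_pow_sum, Finsupp.sum,
      eq_intCast, Int.cast_mul, Int.cast_pow]
    ring
  rw [hterm]
  refine Subring.mul_mem _ (Subring.mem_bot.2 ⟨_, rfl⟩)
    (Subring.prod_mem _ fun j _ => pow_mem ?_ _)
  obtain ⟨z, hz⟩ := hx j
  exact Subring.mem_bot.2 ⟨z, hz.symm⟩

theorem Filter.Tendsto.finite_preimage_of_isBounded {α E : Type*} [Bornology E] {a : α → E}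
    (ha : Tendsto a cofinite (Bornology.cobounded E)) {s : Set E} (hs : Bornology.IsBounded s) :
    (a ⁻¹' s).Finite :=
  (eventually_cofinite.1 (ha.eventually (Bornology.isBounded_def.1 hs))).subset
    fun _ h => not_not.2 h

theorem stmt_17_general (n : ℕ) (C : Set (Fin n → ℂ))
    (hirr : (vanishingIdeal n C).IsPrime)
    (hcurve : ringKrullDim (MvPolynomial (Fin n) ℂ ⧸ vanishingIdeal n C) = 1)
    (d : ℕ) (hd : 0 < d)
    (H : MvPolynomial (Fin n) ℤ)
    (hnc : ¬ ∃ c : ℂ, ∀ x ∈ C, aeval x H = c)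
    (a : ℕ → (Fin n → ℂ))
    (ha : ∀ k, a k ∈ C ∧ ∀ j, ∃ z : ℤ, a k j = (z : ℂ) / d)
    (htendsto : Tendsto (fun k => ‖a k‖) atTop atTop) :
    Tendsto (fun k => ‖aeval (a k) H‖) atTop atTop := by
  have hdC : (d : ℂ) ≠ 0 := by exact_mod_cast hd.ne'
  choose m hm using fun k => exists_intCast_eq_pow_totalDegree_mul_aeval H (d := d) (x := a k)
    fun j => let ⟨z, hz⟩ := (ha k).2 j; ⟨z, by rw [hz]; push_cast; field_simp⟩
  push_cast at hm
  have ha_cobounded : Tendsto a cofinite (Bornology.cobounded _) := by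
    rwa [Nat.cofinite_eq_atTop, ← tendsto_norm_atTop_iff_cobounded]
  have hfiber : ∀ c : ℤ, (m ⁻¹' {c}).Finite := fun c => by
    push Not at hnc
    have hlevel := finite_setOf_aeval_eq_of_ringKrullDim_le_one hirr hcurve.le
      (hnc (c / (d : ℂ) ^ H.totalDegree))
    refine (ha_cobounded.finite_preimage_of_isBounded hlevel.isBounded).subset fun k hk => ?_
    refine ⟨(ha k).1, ?_⟩
    rw [eq_div_iff (pow_ne_zero _ hdC), mul_comm, ← hm k, Set.mem_singleton_iff.1 hk]
  have hm_cocompact : Tendsto m atTop (cocompact ℤ) := by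
    rw [cocompact_eq_cofinite, ← Nat.cofinite_eq_atTop]
    exact Tendsto.cofinite_of_finite_preimage_singleton fun c => (hfiber c).to_subtype
  refine ((tendsto_norm_cocompact_atTop.comp hm_cocompact).atTop_div_const
    (by positivity : (0 : ℝ) < (d : ℝ) ^ H.totalDegree)).congr fun k => ?_
  rw [Function.comp_apply, Int.norm_eq_abs, ← Complex.norm_intCast, hm k, norm_mul, norm_pow,
    Complex.norm_natCast]
  field_simp

/-- Let `C ⊆ ℂⁿ` be an irreducible affine curve over `ℚ` with `C ∩ d⁻¹ℤⁿ` infinite, and let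
`H ∈ ℤ[X]` be nonconstant on `C`.  Then along any sequence of points of `C ∩ d⁻¹ℤⁿ` tending to
infinity, `|H| → ∞`. -/
theorem stmt_17 (n : ℕ) (C : Set (Fin n → ℂ))
    (S : Set (MvPolynomial (Fin n) ℚ))
    (hQ : C = {x | ∀ p ∈ S, aeval x p = 0})
    (hne : C.Nonempty)
    (hirr : (vanishingIdeal n C).IsPrime)
    (hcurve : ringKrullDim (MvPolynomial (Fin n) ℂ ⧸ vanishingIdeal n C) = 1)
    (d : ℕ) (hd : 0 < d)
    (hinf : {x ∈ C | ∀ j, ∃ z : ℤ, x j = (z : ℂ) / d}.Infinite)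
    (H : MvPolynomial (Fin n) ℤ)
    (hnc : ¬ ∃ c : ℂ, ∀ x ∈ C, aeval x H = c)
    (a : ℕ → (Fin n → ℂ))
    (ha : ∀ k, a k ∈ C ∧ ∀ j, ∃ z : ℤ, a k j = (z : ℂ) / d)
    (htendsto : Tendsto (fun k => ‖a k‖) atTop atTop) :
    Tendsto (fun k => ‖aeval (a k) H‖) atTop atTop :=
  stmt_17_general n C hirr hcurve d hd H hnc a ha htendsto
end
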